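/- Let T >= 1 and 1 <= q <= T be integers and let theta : {1,...,T} -> Real. Then there exists a pair (u, w) feasible for theta and q such that sum_{t=1}^T u_t + sum_{k=1}^T w_k = sum_{t=1}^q theta_{(t)}, the ordered q-sum of theta. Consequently, the maximum of sum_t u_t + sum_k w_k over all feasible pairs (u, w) equals the ordered q-sum of theta. (A maximizer is given by u_t = min(theta_t, r), w_k = 0 for k <= q and w_k = -r for k > q, where r = theta_{(q)}.) -/

import Mathlib

/-- The ordered `q`-sum of `theta`: the sum of the `q` smallest components of `theta`,
expressed via the sorting permutation `Tuple.sort theta` (so that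
`theta ∘ Tuple.sort theta` is the non-decreasing rearrangement of `theta`). -/
noncomputable def orderedQSum (T q : ℕ) (theta : Fin T → ℝ) : ℝ :=
  ∑ t ∈ Finset.univ.filter (fun t : Fin T => (t : ℕ) < q), theta (Tuple.sort theta t)

/-- Feasibility of a pair `(u, w)` for the linear reformulation of the
ordered `q`-sum objective. -/
def Feasible (T q : ℕ) (theta u w : Fin T → ℝ) : Prop :=
  (∀ t k : Fin T, (k : ℕ) < q → u t + w k ≤ theta t) ∧
  (∀ t k : Fin T, q ≤ (k : ℕ) → u t + w k ≤ 0)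


/-!
Pair the component `theta (σ t)` with the index `t`, where `σ = Tuple.sort theta`. Feasibility
bounds each pair `u (σ t) + w t` by `theta (σ t)` for `t < q` and by `0` otherwise, and summing
gives the upper bound. Cutting `theta` at the threshold `r = theta (σ (q - 1))` attains every one
of these bounds: for `t < q` the pair is `theta (σ t) + 0`, for `t ≥ q` it is `r + (-r)`.
-/

open Finset

variable {T q : ℕ} {theta : Fin T → ℝ}

lemma orderedQSum_eq_sum_ite :
    orderedQSum T q theta =
      ∑ t : Fin T, if (t : ℕ) < q then theta (Tuple.sort theta t) else 0 :=
  sum_filter _ _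

lemma sum_add_sum_eq_sum_comp_add {α M : Type*} [Fintype α] [AddCommMonoid M]
    (σ : Equiv.Perm α) (u w : α → M) :
    (∑ t, u t) + (∑ k, w k) = ∑ t, (u (σ t) + w t) := by
  rw [sum_add_distrib, Equiv.sum_comp σ u]

lemma Feasible.sum_add_sum_le_orderedQSum {u w : Fin T → ℝ} (h : Feasible T q theta u w) :
    (∑ t, u t) + (∑ k, w k) ≤ orderedQSum T q theta := by
  rw [sum_add_sum_eq_sum_comp_add (Tuple.sort theta), orderedQSum_eq_sum_ite]
  refine sum_le_sum fun t _ => ?_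
  split_ifs with ht
  · exact h.1 _ t ht
  · exact h.2 _ t (not_lt.mp ht)

lemma feasible_min_threshold (r : ℝ) :
    Feasible T q theta (fun t => min (theta t) r) (fun k => if (k : ℕ) < q then 0 else -r) := by
  constructor
  · intro t k hk
    simp [hk]
  · intro t k hk
    simp [not_lt.mpr hk]

lemma sum_min_threshold_eq_orderedQSum {r : ℝ}
    (hlow : ∀ t : Fin T, (t : ℕ) < q → theta (Tuple.sort theta t) ≤ r)
    (hhigh : ∀ t : Fin T, q ≤ (t : ℕ) → r ≤ theta (Tuple.sort theta t)) :
    (∑ t, min (theta t) r) + (∑ k : Fin T, if (k : ℕ) < q then 0 else -r) =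
      orderedQSum T q theta := by
  rw [sum_add_sum_eq_sum_comp_add (Tuple.sort theta), orderedQSum_eq_sum_ite]
  refine sum_congr rfl fun t _ => ?_
  split_ifs with ht
  · simp [hlow t ht]
  · simp [hhigh t (not_lt.mp ht)]

theorem stmt_10_general (T q : ℕ) (hq1 : 1 ≤ q) (hqT : q ≤ T)
    (theta : Fin T → ℝ) :
    IsGreatest
      {s : ℝ | ∃ u w : Fin T → ℝ, Feasible T q theta u w ∧
        s = (∑ t, u t) + (∑ k, w k)}
      (orderedQSum T q theta) := by
  have hmono : Monotone (theta ∘ Tuple.sort theta) := Tuple.monotone_sort theta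
  let qth : Fin T := ⟨q - 1, by omega⟩
  have hlow : ∀ t : Fin T, (t : ℕ) < q →
      theta (Tuple.sort theta t) ≤ theta (Tuple.sort theta qth) :=
    fun t ht => hmono (Fin.le_def.mpr (by simp [qth]; omega))
  have hhigh : ∀ t : Fin T, q ≤ (t : ℕ) →
      theta (Tuple.sort theta qth) ≤ theta (Tuple.sort theta t) :=
    fun t ht => hmono (Fin.le_def.mpr (by simp [qth]; omega))
  refine ⟨⟨_, _, feasible_min_threshold _,
    (sum_min_threshold_eq_orderedQSum hlow hhigh).symm⟩, ?_⟩
  rintro s ⟨u, w, hf, rfl⟩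
  exact hf.sum_add_sum_le_orderedQSum

theorem stmt_10 (T q : ℕ) (hT : 1 ≤ T) (hq1 : 1 ≤ q) (hqT : q ≤ T)
    (theta : Fin T → ℝ) :
    IsGreatest
      {s : ℝ | ∃ u w : Fin T → ℝ, Feasible T q theta u w ∧
        s = (∑ t, u t) + (∑ k, w k)}
      (orderedQSum T q theta) :=
  stmt_10_general T q hq1 hqT theta
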